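/- arXiv:1210.7373 — 2 statements merged into one kernel-verified Lean document; each statement's English description precedes it below -/
import Mathlib

section
/- Let G be a topological group acting continuously on a compact Hausdorff space X. If for every finite subset G₀ of G and every finite cover of X by closed sets there exist a point x ∈ X and a member K of the cover such that {g • x : g ∈ G₀} ⊆ K, then the action has a fixed point, i.e., there is x₀ ∈ X with g • x₀ = x₀ for all g ∈ G. -/
open UniformSpace Set Classical in

lemma exists_small_closed_cover {X : Type*} [UniformSpace X] [CompactSpace X]
    {U : Set (X × X)} (hU : U ∈ uniformity X) :
    ∃ 𝒦 : Finset (Set X), (∀ K ∈ 𝒦, IsClosed K) ∧ ⋃₀ (𝒦 : Set (Set X)) = Set.univ ∧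
      ∀ K ∈ 𝒦, ∀ y ∈ K, ∀ z ∈ K, (y, z) ∈ U := by
  obtain ⟨W, hW, hWU⟩ := comp_mem_uniformity_sets hU
  obtain ⟨V₀, ⟨hV₀, hV₀c⟩, hV₀W⟩ := uniformity_hasBasis_closed.mem_iff.1 hW
  set V : Set (X × X) := V₀ ∩ Prod.swap ⁻¹' V₀ with hVdef
  have hV : V ∈ uniformity X := Filter.inter_mem hV₀ (symm_le_uniformity hV₀)
  have hVc : IsClosed V := hV₀c.inter (hV₀c.preimage continuous_swap)
  obtain ⟨t, ht⟩ := isCompact_univ.elim_nhds_subcover (fun x => ball x V)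
    fun x _ => ball_mem_nhds x hV
  refine ⟨t.image (fun x => ball x V), ?_, ?_, ?_⟩
  · intro K hK
    obtain ⟨x, _, rfl⟩ := Finset.mem_image.1 hK
    exact hVc.preimage (Continuous.prodMk_right x)
  · apply Set.eq_univ_of_univ_subset
    intro y _
    obtain ⟨x, hx, hxy⟩ := Set.mem_iUnion₂.1 (ht.2 (Set.mem_univ y))
    exact ⟨ball x V, Finset.mem_coe.2 (Finset.mem_image_of_mem _ hx), hxy⟩
  · intro K hK y hy z hz
    obtain ⟨x, _, rfl⟩ := Finset.mem_image.1 hK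
    exact hWU ⟨x, hV₀W hy.2, hV₀W hz.1⟩

open UniformSpace Classical in
theorem fixed_point_of_closed_cover_criterion
    (G X : Type*) [Group G] [TopologicalSpace G] [IsTopologicalGroup G]
    [TopologicalSpace X] [CompactSpace X] [T2Space X] [Nonempty X]
    [MulAction G X] [ContinuousSMul G X]
    (h : ∀ (G₀ : Finset G) (𝒦 : Finset (Set X)),
      (∀ K ∈ 𝒦, IsClosed K) → ⋃₀ (𝒦 : Set (Set X)) = Set.univ →
      ∃ x : X, ∃ K ∈ 𝒦, ∀ g ∈ G₀, g • x ∈ K) :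
    ∃ x₀ : X, ∀ g : G, g • x₀ = x₀ := by
  classical
  letI : UniformSpace X := uniformSpaceOfCompactR1
  -- the fixed-point set of a single element
  have hSclosed : ∀ g : G, IsClosed {x : X | g • x = x} := fun g =>
    isClosed_eq (continuous_const_smul g) continuous_id
  -- Step 1: for each finite G₀, there is a common fixed point of G₀.
  have key : ∀ G₀ : Finset G, (⋂ g ∈ G₀, {x : X | g • x = x}).Nonempty := by
    intro G₀
    -- the approximate fixed-point sets
    set ι := {V : Set (X × X) // V ∈ uniformity X ∧ IsClosed V}
    set A : ι → Set X := fun V => {x : X | ∀ g ∈ G₀, (g • x, x) ∈ V.1} with hA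
    have hAclosed : ∀ V : ι, IsClosed (A V) := by
      intro V
      have : A V = ⋂ g ∈ G₀, (fun x : X => (g • x, x)) ⁻¹' V.1 := by
        ext x; simp [hA]
      rw [this]
      exact isClosed_biInter fun g _ =>
        V.2.2.preimage ((continuous_const_smul g).prodMk continuous_id)
    have hAne : ∀ V : ι, (A V).Nonempty := by
      rintro ⟨U, hU, -⟩
      obtain ⟨𝒦, h𝒦c, h𝒦u, h𝒦s⟩ := exists_small_closed_cover (X := X) hU
      obtain ⟨x, K, hK, hxK⟩ := h (insert 1 G₀) 𝒦 h𝒦c h𝒦u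
      refine ⟨x, fun g hg => ?_⟩
      have hx : x ∈ K := by simpa using hxK 1 (Finset.mem_insert_self 1 G₀)
      exact h𝒦s K hK _ (hxK g (Finset.mem_insert_of_mem hg)) x hx
    have hne : Nonempty ι := ⟨⟨Set.univ, Filter.univ_mem, isClosed_univ⟩⟩
    have hdir : Directed (· ⊇ ·) A := by
      rintro ⟨U, hU, hUc⟩ ⟨V, hV, hVc⟩
      refine ⟨⟨U ∩ V, Filter.inter_mem hU hV, hUc.inter hVc⟩, ?_, ?_⟩
      · intro x hx g hg; exact (hx g hg).1
      · intro x hx g hg; exact (hx g hg).2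
    obtain ⟨x, hx⟩ := IsCompact.nonempty_iInter_of_directed_nonempty_isCompact_isClosed
      A hdir hAne (fun V => (hAclosed V).isCompact) hAclosed
    refine ⟨x, Set.mem_iInter₂.2 fun g hg => ?_⟩
    have : ∀ {V : Set (X × X)}, V ∈ uniformity X → IsClosed V → (g • x, x) ∈ V := by
      intro V hV hVc
      exact Set.mem_iInter.1 hx ⟨V, hV, hVc⟩ g hg
    exact eq_of_uniformity_basis uniformity_hasBasis_closed fun hi => this hi.1 hi.2
  -- Step 2: compactness over all finite subsets
  have hdir : Directed (· ⊇ ·) (fun G₀ : Finset G => ⋂ g ∈ G₀, {x : X | g • x = x}) := by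
    intro s t
    exact ⟨s ∪ t,
      Set.biInter_subset_biInter_left (fun g hg => Finset.mem_union_left _ hg),
      Set.biInter_subset_biInter_left (fun g hg => Finset.mem_union_right _ hg)⟩
  obtain ⟨x₀, hx₀⟩ := IsCompact.nonempty_iInter_of_directed_nonempty_isCompact_isClosed
    _ hdir key
    (fun s => ((isClosed_biInter fun g _ => hSclosed g).isCompact))
    (fun s => isClosed_biInter fun g _ => hSclosed g)
  exact ⟨x₀, fun g => Set.mem_iInter₂.1 (Set.mem_iInter.1 hx₀ {g}) g (Finset.mem_singleton_self g)⟩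
end

section
/- There is no order-embedding f : ℚ → ℚ such that the coloring h : {(a,b) : a < b in ℚ} → 2 defined by h(a,b) = 0 if a <_F b and h(a,b) = 1 if b <_F a is constant on increasing pairs from the image of f. Equivalently, ℚ ↛ (ℚ)²₂: there is a 2-coloring of increasing pairs of rationals such that no subset of ℚ order-isomorphic to ℚ is monochromatic. -/
/-- `ℚ ↛ (ℚ)²₂`: coloring an increasing pair `(a,b)` of rationals according to whether `a`
precedes `b` in a fixed well-order of type `ω` on `ℚ` (given by an injective enumeration
`Encodable.encode : ℚ → ℕ`), no order-embedded copy of `ℚ` is monochromatic. -/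
theorem no_monochromatic_copy_of_rat :
    ∀ f : ℚ ↪o ℚ, ¬ ∃ c : Bool, ∀ a b : ℚ, a < b →
      ((Encodable.encode (f a) < Encodable.encode (f b)) ↔ c = true) := by
  rintro f ⟨c, hc⟩
  cases c with
  | true =>
    -- every a < 0 has encode (f a) < encode (f 0): infinitely many distinct nats below bound
    set N := Encodable.encode (f (0 : ℚ)) with hN
    have hlt : ∀ n : ℕ, Encodable.encode (f (-(n + 1) : ℚ)) < N := by
      intro n
      exact (hc _ 0 (by have : (0:ℚ) ≤ n := Nat.cast_nonneg n; linarith)).mpr rfl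
    have hinj : Function.Injective (fun n : ℕ => (⟨Encodable.encode (f (-(n + 1) : ℚ)), hlt n⟩ : Fin N)) := by
      intro m n h
      have h1 : Encodable.encode (f (-(m + 1) : ℚ)) = Encodable.encode (f (-(n + 1) : ℚ)) := by
        simpa [Fin.ext_iff] using h
      have h2 := f.injective (Encodable.encode_injective h1)
      have : (m : ℚ) = n := by linarith [neg_injective h2]
      exact_mod_cast this
    obtain ⟨m, n, hne, he⟩ := Finite.exists_ne_map_eq_of_infinite
      (fun n : ℕ => (⟨Encodable.encode (f (-(n + 1) : ℚ)), hlt n⟩ : Fin N))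
    exact hne (hinj he)
  | false =>
    -- e n := encode (f n) is strictly decreasing: impossible
    have hle : ∀ n : ℕ, Encodable.encode (f ((n : ℚ) + 1)) < Encodable.encode (f (n : ℚ)) := by
      intro n
      have h := hc (n : ℚ) ((n : ℚ) + 1) (by linarith)
      have hne : Encodable.encode (f ((n : ℚ) + 1)) ≠ Encodable.encode (f (n : ℚ)) := by
        intro he
        have := f.injective (Encodable.encode_injective he)
        linarith
      have hnot : ¬ Encodable.encode (f (n : ℚ)) < Encodable.encode (f ((n : ℚ) + 1)) := by
        simp at h; omega
      omega
    have key : ∀ n : ℕ, Encodable.encode (f (n : ℚ)) + n ≤ Encodable.encode (f (0 : ℚ)) := by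
      intro n
      induction n with
      | zero => simp
      | succ k ih => have := hle k; push_cast; omega
    have := key (Encodable.encode (f (0 : ℚ)) + 1)
    omega
end
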